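/- Let D be a category with chosen pullbacks, and let f : (I, a) → (K, c) and g : (J, b) → (K, c) be morphisms in the Grothendieck twist Tw(D), with underlying functions f : I → K and g : J → K and components F_i : a i ⟶ c (f i) and G_j : b j ⟶ c (g j). Then the object of Tw(D) whose index set is the fiber product I ×_K J = {(i, j) : I × J // f i = g j} and whose family assigns to (i, j) the pullback in D of F_i and G_j (viewed as morphisms to the common object c (f i) = c (g j)), together with the two evident projection morphisms (whose underlying functions are the projections of the fiber product and whose components are the pullback projections in D), is a pullback of f and g in Tw(D). -/

import Mathlib

/-! Morphisms of `Tw(D)` into a fixed object are determined index by index, so a cone over `f`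
and `g` assigns to each index `w` a pair `(i, j)` with `f i = g j` together with a commuting square
in `D` (up to the transport `c (f i) = c (g j)`); the pullback in `D` at `(i, j)` factors that
square uniquely. -/

open CategoryTheory CategoryTheory.Limits

universe v u

/-- An object of the Grothendieck twist `Tw(D)`: a finite index type together with a
family of objects of `D`. -/
structure TwObj (D : Type u) [Category.{v} D] : Type (max u 1) where
  ι : Type
  [fin : Finite ι]
  obj : ι → D

attribute [instance] TwObj.fin

/-- A morphism of the Grothendieck twist `Tw(D)`: a function of index types together with
componentwise morphisms of `D`. -/
structure TwHom {D : Type u} [Category.{v} D] (X Y : TwObj D) : Type (max v 1) where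
  toFun : X.ι → Y.ι
  map : ∀ i, X.obj i ⟶ Y.obj (toFun i)

theorem TwHom.hext {D : Type u} [Category.{v} D] {X Y : TwObj D} {f g : TwHom X Y}
    (h1 : f.toFun = g.toFun) (h2 : HEq f.map g.map) : f = g := by
  cases f; cases g; cases h1; cases h2; rfl

instance (D : Type u) [Category.{v} D] : Category (TwObj D) where
  Hom X Y := TwHom X Y
  id X := ⟨id, fun i => 𝟙 _⟩
  comp f g := ⟨g.toFun ∘ f.toFun, fun i => f.map i ≫ g.map (f.toFun i)⟩
  id_comp f := TwHom.hext rfl (heq_of_eq (funext fun i => Category.id_comp _))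
  comp_id f := TwHom.hext rfl (heq_of_eq (funext fun i => Category.comp_id _))
  assoc f g h := TwHom.hext rfl (heq_of_eq (funext fun i => Category.assoc _ _ _))

variable {D : Type u} [Category.{v} D] [HasPullbacks D]

/-- The candidate pullback object in `Tw(D)`: indexed by the fiber product of the index
sets, with family given by pullbacks in `D`. -/
noncomputable def twPullbackObj {X Y Z : TwObj D} (f : X ⟶ Z) (g : Y ⟶ Z) : TwObj D where
  ι := {p : X.ι × Y.ι // f.toFun p.1 = g.toFun p.2}
  obj p := pullback (f.map p.1.1) (g.map p.1.2 ≫ eqToHom (congrArg Z.obj p.2.symm))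

/-- The first projection of the candidate pullback. -/
noncomputable def twPullbackFst {X Y Z : TwObj D} (f : X ⟶ Z) (g : Y ⟶ Z) : twPullbackObj f g ⟶ X where
  toFun p := p.1.1
  map p := pullback.fst (f.map p.1.1) (g.map p.1.2 ≫ eqToHom (congrArg Z.obj p.2.symm))

/-- The second projection of the candidate pullback. -/
noncomputable def twPullbackSnd {X Y Z : TwObj D} (f : X ⟶ Z) (g : Y ⟶ Z) : twPullbackObj f g ⟶ Y where
  toFun p := p.1.2
  map p := pullback.snd (f.map p.1.1) (g.map p.1.2 ≫ eqToHom (congrArg Z.obj p.2.symm))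

section TwHom

variable {C : Type*} [Category C] {W X Y : TwObj C}

lemma TwHom.ext_eqToHom {φ ψ : X ⟶ Y} (h : ∀ i, φ.toFun i = ψ.toFun i)
    (hmap : ∀ i, φ.map i ≫ eqToHom (congrArg Y.obj (h i)) = ψ.map i) : φ = ψ := by
  obtain ⟨φt, φm⟩ := φ
  obtain ⟨ψt, ψm⟩ := ψ
  obtain rfl : φt = ψt := funext h
  simp only [eqToHom_refl, Category.comp_id] at hmap
  exact TwHom.hext rfl (heq_of_eq (funext hmap))

lemma TwHom.congr_map {φ ψ : X ⟶ Y} (h : φ = ψ) (i : X.ι) :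
    φ.map i ≫ eqToHom (congrArg Y.obj (congrFun (congrArg TwHom.toFun h) i)) = ψ.map i := by
  subst h
  simp

lemma TwHom.eqToHom_comp_map (φ : X ⟶ Y) {i i' : X.ι} (e : i = i') :
    eqToHom (congrArg X.obj e) ≫ φ.map i' =
      φ.map i ≫ eqToHom (congrArg (fun k => Y.obj (φ.toFun k)) e) := by
  subst e
  simp

lemma TwHom.congr_map_comp {m m' : W ⟶ X} {φ : X ⟶ Y} (h : m ≫ φ = m' ≫ φ)
    {w : W.ι} (e : m.toFun w = m'.toFun w) :
    (m.map w ≫ eqToHom (congrArg X.obj e)) ≫ φ.map (m'.toFun w) = m'.map w ≫ φ.map (m'.toFun w) :=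
  calc (m.map w ≫ eqToHom (congrArg X.obj e)) ≫ φ.map (m'.toFun w)
      = (m.map w ≫ φ.map (m.toFun w)) ≫ eqToHom _ := by
        rw [Category.assoc, TwHom.eqToHom_comp_map φ e, Category.assoc]
    _ = m'.map w ≫ φ.map (m'.toFun w) := TwHom.congr_map h w

end TwHom

section Pullback

variable {X Y Z W : TwObj D} (f : X ⟶ Z) (g : Y ⟶ Z)

lemma twPullback_condition : twPullbackFst f g ≫ f = twPullbackSnd f g ≫ g :=
  TwHom.ext_eqToHom (fun p => p.2) fun _ =>
    (comp_eqToHom_iff _ _ _).2 (pullback.condition.trans (Category.assoc _ _ _).symm)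

variable {f g}

noncomputable def twPullbackLift {α : W ⟶ X} {β : W ⟶ Y} (h : α ≫ f = β ≫ g) :
    W ⟶ twPullbackObj f g where
  toFun w := ⟨(α.toFun w, β.toFun w), congrFun (congrArg TwHom.toFun h) w⟩
  map w := pullback.lift (α.map w) (β.map w)
    (((comp_eqToHom_iff _ _ _).1 (TwHom.congr_map h w)).trans (Category.assoc _ _ _))

lemma twPullbackLift_fst {α : W ⟶ X} {β : W ⟶ Y} (h : α ≫ f = β ≫ g) :
    twPullbackLift h ≫ twPullbackFst f g = α :=
  TwHom.ext_eqToHom (fun _ => rfl) fun _ => (Category.comp_id _).trans (pullback.lift_fst _ _ _)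

lemma twPullbackLift_snd {α : W ⟶ X} {β : W ⟶ Y} (h : α ≫ f = β ≫ g) :
    twPullbackLift h ≫ twPullbackSnd f g = β :=
  TwHom.ext_eqToHom (fun _ => rfl) fun _ => (Category.comp_id _).trans (pullback.lift_snd _ _ _)

lemma twPullback_hom_ext {m m' : W ⟶ twPullbackObj f g}
    (hfst : m ≫ twPullbackFst f g = m' ≫ twPullbackFst f g)
    (hsnd : m ≫ twPullbackSnd f g = m' ≫ twPullbackSnd f g) : m = m' := by
  have hfun (w : W.ι) : m.toFun w = m'.toFun w :=
    Subtype.ext (Prod.ext (congrFun (congrArg TwHom.toFun hfst) w)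
      (congrFun (congrArg TwHom.toFun hsnd) w))
  exact TwHom.ext_eqToHom hfun fun w => pullback.hom_ext
    (TwHom.congr_map_comp hfst (hfun w)) (TwHom.congr_map_comp hsnd (hfun w))

end Pullback

/-- The explicit object `{(i,j) | f i = g j}` with family the pullbacks
`a i ×_{c (f i)} b j`, together with the evident projections, is a pullback of `f` and
`g` in `Tw(D)`. -/
theorem twPullback_isPullback {X Y Z : TwObj D} (f : X ⟶ Z) (g : Y ⟶ Z) :
    IsPullback (twPullbackFst f g) (twPullbackSnd f g) f g :=
  ⟨⟨twPullback_condition f g⟩, ⟨PullbackCone.IsLimit.mk (twPullback_condition f g)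
    (fun s => twPullbackLift s.condition) (fun s => twPullbackLift_fst s.condition)
    (fun s => twPullbackLift_snd s.condition)
    (fun s _ hfst hsnd => twPullback_hom_ext (hfst.trans (twPullbackLift_fst s.condition).symm)
      (hsnd.trans (twPullbackLift_snd s.condition).symm))⟩⟩
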